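/- For all n ≥ 0 and j ≥ 1, ∑_{k=0}^{⌊n/2⌋} C(n,2k) 5^k F_j^{2k} F_{j(n-2k)} B_{2k} = (n/2) F_j L_{j(n-1)} (Kelisky's formula). -/

import Mathlib

def lucas : ℕ → ℕ
  | 0 => 2
  | 1 => 1
  | n + 2 => lucas (n + 1) + lucas n

noncomputable def eulerPoly : ℕ → Polynomial ℚ
  | n => Polynomial.X ^ n - Polynomial.C (1/2 : ℚ) *
      ∑ k : Fin n, (n.choose k : ℚ) • eulerPoly k

noncomputable def eulerNumber (n : ℕ) : ℚ := 2 ^ n * (eulerPoly n).eval (1/2)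

section
open Polynomial Real goldenRatio

lemma bern_comp (n : ℕ) :
    (Polynomial.bernoulli n).comp (Polynomial.X + 1) =
      Polynomial.bernoulli n + (n : ℚ) • Polynomial.X ^ (n - 1) := by
  apply Polynomial.funext
  intro x
  rw [Polynomial.eval_comp]
  simp only [Polynomial.eval_add, Polynomial.eval_X, Polynomial.eval_one, Polynomial.eval_smul,
    Polynomial.eval_pow, smul_eq_mul]
  rw [add_comm x 1, Polynomial.bernoulli_eval_one_add]

lemma aeval_bern_add_one (n : ℕ) (x : ℝ) :
    Polynomial.aeval (x + 1) (Polynomial.bernoulli n) =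
      Polynomial.aeval x (Polynomial.bernoulli n) + n * x ^ (n - 1) := by
  have h := congrArg (Polynomial.aeval x (R := ℚ) (A := ℝ)) (bern_comp n)
  rw [Polynomial.aeval_comp] at h
  simpa [Rat.smul_def] using h

lemma aeval_bern_expand (n : ℕ) (x : ℝ) :
    Polynomial.aeval x (Polynomial.bernoulli n) =
      ∑ i ∈ Finset.range (n + 1), ((bernoulli i : ℚ) : ℝ) * (n.choose i : ℝ) * x ^ (n - i) := by
  rw [Polynomial.bernoulli, map_sum]
  refine Finset.sum_congr rfl fun i _ => ?_
  rw [Polynomial.aeval_monomial, eq_ratCast]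
  push_cast
  ring

lemma lucas_real : ∀ m : ℕ, (lucas m : ℝ) = φ ^ m + ψ ^ m
  | 0 => by norm_num [lucas]
  | 1 => by
      rw [show lucas 1 = 1 from rfl, pow_one, pow_one]
      push_cast
      linarith [goldenRatio_add_goldenConj]
  | (m + 2) => by
      have h1 := lucas_real (m + 1)
      have h2 := lucas_real m
      have hφ : φ ^ (m + 2) = φ ^ (m + 1) + φ ^ m := by
        calc φ ^ (m + 2) = φ ^ m * φ ^ 2 := by ring
        _ = φ ^ m * (φ + 1) := by rw [goldenRatio_sq]
        _ = φ ^ (m + 1) + φ ^ m := by ring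
      have hψ : ψ ^ (m + 2) = ψ ^ (m + 1) + ψ ^ m := by
        calc ψ ^ (m + 2) = ψ ^ m * ψ ^ 2 := by ring
        _ = ψ ^ m * (ψ + 1) := by rw [goldenConj_sq]
        _ = ψ ^ (m + 1) + ψ ^ m := by ring
      have : (lucas (m + 2) : ℝ) = (lucas (m + 1) : ℝ) + (lucas m : ℝ) := by
        rw [show lucas (m+2) = lucas (m+1) + lucas m from rfl]; push_cast; ring
      rw [this, h1, h2, hφ, hψ]; ring

lemma tele (n : ℕ) (hn : 1 ≤ n) (a b : ℝ) (hab : a - b ≠ 0) :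
    ∑ m ∈ Finset.range (n + 1),
        (n.choose m : ℝ) * ((bernoulli m : ℚ) : ℝ) * (a - b) ^ m * (a ^ (n - m) - b ^ (n - m))
      = n * (a - b) * b ^ (n - 1) := by
  have hexp : ∀ c : ℝ, ∑ m ∈ Finset.range (n + 1),
      (n.choose m : ℝ) * ((bernoulli m : ℚ) : ℝ) * (a - b) ^ m * c ^ (n - m)
      = (a - b) ^ n * Polynomial.aeval (c / (a - b)) (Polynomial.bernoulli n) := by
    intro c
    rw [aeval_bern_expand, Finset.mul_sum]
    refine Finset.sum_congr rfl fun m hm => ?_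
    have hmn : m ≤ n := Finset.mem_range_succ_iff.mp hm
    have hpow : (a - b) ^ n = (a - b) ^ m * (a - b) ^ (n - m) := by
      rw [← pow_add, Nat.add_sub_cancel' hmn]
    rw [hpow, div_pow]
    field_simp
  have hsplit : ∑ m ∈ Finset.range (n + 1),
      (n.choose m : ℝ) * ((bernoulli m : ℚ) : ℝ) * (a - b) ^ m * (a ^ (n - m) - b ^ (n - m))
      = (a - b) ^ n * Polynomial.aeval (a / (a - b)) (Polynomial.bernoulli n)
        - (a - b) ^ n * Polynomial.aeval (b / (a - b)) (Polynomial.bernoulli n) := by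
    rw [← hexp a, ← hexp b, ← Finset.sum_sub_distrib]
    exact Finset.sum_congr rfl fun m _ => by ring
  have hdiv : a / (a - b) = b / (a - b) + 1 := by
    field_simp
    ring
  rw [hsplit, hdiv, aeval_bern_add_one]
  have hpow : (a - b) ^ n = (a - b) * (a - b) ^ (n - 1) := by
    conv_lhs => rw [show n = 1 + (n - 1) from (Nat.add_sub_cancel' hn).symm]
    rw [pow_add, pow_one]
  rw [div_pow, hpow]
  field_simp
  ring

lemma even_reindex (n : ℕ) (f : ℕ → ℝ) :
    ∑ m ∈ (Finset.range (n + 1)).filter (fun m => Even m), f m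
      = ∑ k ∈ Finset.range (n / 2 + 1), f (2 * k) := by
  refine Finset.sum_bij' (fun m _ => m / 2) (fun k _ => 2 * k) ?_ ?_ ?_ ?_ ?_
  · intro m hm
    simp only [Finset.mem_filter, Finset.mem_range] at hm
    simp only [Finset.mem_range]
    omega
  · intro k hk
    simp only [Finset.mem_range] at hk
    simp only [Finset.mem_filter, Finset.mem_range]
    exact ⟨by omega, even_two_mul k⟩
  · intro m hm
    simp only [Finset.mem_filter, Finset.mem_range] at hm
    obtain ⟨-, r, hr⟩ := hm
    show 2 * (m / 2) = m
    omega
  · intro k _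
    show 2 * k / 2 = k
    omega
  · intro m hm
    simp only [Finset.mem_filter, Finset.mem_range] at hm
    obtain ⟨-, r, hr⟩ := hm
    show f m = f (2 * (m / 2))
    congr 1
    omega

lemma odd_sum (n : ℕ) (hn : 1 ≤ n) (f : ℕ → ℝ)
    (hf : ∀ m, Odd m → m ≠ 1 → f m = 0) :
    ∑ m ∈ (Finset.range (n + 1)).filter (fun m => ¬ Even m), f m = f 1 := by
  apply Finset.sum_eq_single_of_mem
  · exact Finset.mem_filter.mpr ⟨Finset.mem_range.mpr (by omega), by decide⟩
  · intro m hm hne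
    simp only [Finset.mem_filter, Finset.mem_range] at hm
    exact hf m (Nat.not_even_iff_odd.mp hm.2) hne

lemma bern_odd_zero {m : ℕ} (h : Odd m) (h1 : m ≠ 1) : _root_.bernoulli m = 0 := by
  rw [bernoulli_eq_bernoulli'_of_ne_one h1]
  exact bernoulli'_eq_zero_of_odd h (by rcases h with ⟨r, hr⟩; omega)

lemma main_real (n j : ℕ) (hj : 1 ≤ j) (hn : 1 ≤ n) :
    ∑ k ∈ Finset.range (n / 2 + 1), (n.choose (2 * k) : ℝ) * 5 ^ k *
      (Nat.fib j : ℝ) ^ (2 * k) * (Nat.fib (j * (n - 2 * k)) : ℝ) * ((bernoulli (2 * k) : ℚ) : ℝ)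
      = (n : ℝ) / 2 * (Nat.fib j : ℝ) * (lucas (j * (n - 1)) : ℝ) := by
  have h5 : (Real.sqrt 5) ^ 2 = 5 := Real.sq_sqrt (by norm_num)
  have h5pos : (0:ℝ) < Real.sqrt 5 := Real.sqrt_pos.mpr (by norm_num)
  have h5ne : Real.sqrt 5 ≠ 0 := ne_of_gt h5pos
  have hfibpos : (0:ℝ) < (Nat.fib j : ℝ) := by exact_mod_cast Nat.fib_pos.mpr hj
  have hfib : (Nat.fib j : ℝ) * Real.sqrt 5 = φ ^ j - ψ ^ j := by
    rw [Real.coe_fib_eq]; field_simp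
  have hab : φ ^ j - ψ ^ j ≠ 0 := by
    rw [← hfib]; exact ne_of_gt (mul_pos hfibpos h5pos)
  set f : ℕ → ℝ := fun m => (n.choose m : ℝ) * ((bernoulli m : ℚ) : ℝ) *
      (φ ^ j - ψ ^ j) ^ m * ((φ ^ j) ^ (n - m) - (ψ ^ j) ^ (n - m)) with hfdef
  have hstep : ∀ k ∈ Finset.range (n / 2 + 1),
      (n.choose (2 * k) : ℝ) * 5 ^ k * (Nat.fib j : ℝ) ^ (2 * k) *
        (Nat.fib (j * (n - 2 * k)) : ℝ) * ((bernoulli (2 * k) : ℚ) : ℝ)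
      = f (2 * k) / Real.sqrt 5 := by
    intro k _
    have h1 : (φ ^ j - ψ ^ j) ^ (2 * k) = 5 ^ k * (Nat.fib j : ℝ) ^ (2 * k) := by
      calc (φ ^ j - ψ ^ j) ^ (2 * k) = ((Nat.fib j : ℝ) * Real.sqrt 5) ^ (2 * k) := by
            rw [hfib]
        _ = (Nat.fib j : ℝ) ^ (2 * k) * ((Real.sqrt 5) ^ 2) ^ k := by
            rw [mul_pow, pow_mul (Real.sqrt 5) 2 k]
        _ = 5 ^ k * (Nat.fib j : ℝ) ^ (2 * k) := by rw [h5]; ring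
    have h2 : (Nat.fib (j * (n - 2 * k)) : ℝ)
        = ((φ ^ j) ^ (n - 2 * k) - (ψ ^ j) ^ (n - 2 * k)) / Real.sqrt 5 := by
      rw [Real.coe_fib_eq, pow_mul, pow_mul]
    simp only [hfdef]
    rw [h1, h2]
    ring
  rw [Finset.sum_congr rfl hstep, ← Finset.sum_div, ← even_reindex n f]
  have hzero : ∀ m, Odd m → m ≠ 1 → f m = 0 := by
    intro m hm h1
    simp only [hfdef]
    rw [bern_odd_zero hm h1]
    simp
  have hodd := odd_sum n hn f hzero
  have htot := Finset.sum_filter_add_sum_filter_not (Finset.range (n + 1)) (fun m => Even m) f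
  have htel : ∑ m ∈ Finset.range (n + 1), f m
      = n * (φ ^ j - ψ ^ j) * (ψ ^ j) ^ (n - 1) := by
    simp only [hfdef]
    exact tele n hn _ _ hab
  have heven : ∑ m ∈ (Finset.range (n + 1)).filter (fun m => Even m), f m
      = n * (φ ^ j - ψ ^ j) * (ψ ^ j) ^ (n - 1) - f 1 := by
    rw [← htel, ← htot, hodd]; ring
  rw [heven]
  have hf1 : f 1 = (n : ℝ) * (-1/2 : ℝ) * (φ ^ j - ψ ^ j) *
      ((φ ^ j) ^ (n - 1) - (ψ ^ j) ^ (n - 1)) := by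
    simp only [hfdef]
    rw [_root_.bernoulli_one, Nat.choose_one_right]
    push_cast
    ring
  have hlucas : (lucas (j * (n - 1)) : ℝ) = (φ ^ j) ^ (n - 1) + (ψ ^ j) ^ (n - 1) := by
    rw [lucas_real, pow_mul, pow_mul]
  have hfj : (Nat.fib j : ℝ) = (φ ^ j - ψ ^ j) / Real.sqrt 5 := by
    rw [← hfib]; field_simp
  rw [hf1, hlucas, hfj]
  field_simp
  ring

end

theorem stmt6 (n j : ℕ) (hj : 1 ≤ j) :
    ∑ k ∈ Finset.range (n / 2 + 1), (n.choose (2 * k) : ℚ) * 5 ^ k *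
      (Nat.fib j : ℚ) ^ (2 * k) * (Nat.fib (j * (n - 2 * k)) : ℚ) * bernoulli (2 * k)
      = (n : ℚ) / 2 * (Nat.fib j : ℚ) * (lucas (j * (n - 1)) : ℚ) := by
  rcases Nat.eq_zero_or_pos n with rfl | hn
  · norm_num
  · have h := main_real n j hj hn
    apply Rat.cast_injective (α := ℝ)
    push_cast
    convert h using 2
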